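/- arXiv:0708.1776 — 7 statements merged into one kernel-verified Lean document; each statement's English description precedes it below -/
import Mathlib

section
/- Let (λ_n) be a sequence of partitions, λ_n a partition of N_n, with N_n → ∞. Regard each λ_n and its conjugate λ'_n as infinite nonincreasing sequences of nonnegative integers by appending zeros. Suppose that for every i ≥ 1, λ_{n,i}/N_n → p_i, and for every j ≥ 1, λ'_{n,j}/N_n → q_j, as n → ∞. Then (Σ_i C(λ_{n,i}, 2) − Σ_j C(λ'_{n,j}, 2)) / C(N_n, 2) converges to Σ_i p_i² − Σ_j q_j² as n → ∞ (in particular both series converge). -/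
/-!
Since `Σ_i λ_i = N`, one has
`Σ_i C(λ_i, 2) / C(N, 2) = (Σ_i (λ_i / N)² − 1/N) / (1 − 1/N)`, so it suffices that
`Σ_i (λ_i / N)² → Σ_i p_i²`. Because `λ` is nonincreasing, `(i + 1) λ_i ≤ N`, hence
`(λ_i / N)² ≤ 1 / (i + 1)²` uniformly in `n`; this summable bound lets Tannery's theorem pass the
limit through the sum. The conjugate partition is again a partition of `N`, so the same argument
applies to the columns.
-/

open Finset Filter Topology

structure IsPartitionOf (a : ℕ → ℕ) (m N : ℕ) : Prop where
  antitone : Antitone a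
  eq_zero_of_le : ∀ i, m ≤ i → a i = 0
  sum_range : ∑ i ∈ range m, a i = N

-- `λ'_{j+1}` in the 1-indexed notation of partitions.
def conjPart (m : ℕ) (a : ℕ → ℕ) (j : ℕ) : ℕ := #{i ∈ range m | j < a i}

namespace IsPartitionOf

variable {a : ℕ → ℕ} {m N : ℕ}

theorem sum_range_le (h : IsPartitionOf a m N) (M : ℕ) : ∑ i ∈ range M, a i ≤ N := by
  rw [← h.sum_range]
  rcases le_total M m with hM | hM
  · exact sum_le_sum_of_subset (range_subset_range.2 hM)
  · exact (sum_subset (range_subset_range.2 hM)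
      fun i _ hi => h.eq_zero_of_le i (by simpa using hi)).ge

theorem succ_mul_le (h : IsPartitionOf a m N) (j : ℕ) : (j + 1) * a j ≤ N :=
  calc (j + 1) * a j = ∑ _i ∈ range (j + 1), a j := by simp
    _ ≤ ∑ i ∈ range (j + 1), a i :=
      sum_le_sum fun i hi => h.antitone (Nat.lt_succ_iff.1 (mem_range.1 hi))
    _ ≤ N := h.sum_range_le _

theorem apply_le (h : IsPartitionOf a m N) (i : ℕ) : a i ≤ N :=
  (Nat.le_mul_of_pos_left _ i.succ_pos).trans (h.succ_mul_le i)

theorem conjPart_isPartitionOf (h : IsPartitionOf a m N) : IsPartitionOf (conjPart m a) N N where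
  antitone _ _ hjj' := card_le_card fun _ hi => by
    simp only [mem_filter] at hi ⊢
    exact ⟨hi.1, hjj'.trans_lt hi.2⟩
  eq_zero_of_le j hj := card_eq_zero.2 <| filter_eq_empty_iff.2 fun i _ => by
    have := h.apply_le i
    omega
  sum_range := by
    have hrow : ∀ i, #{j ∈ range N | j < a i} = a i := fun i => by
      have := h.apply_le i
      rw [show {j ∈ range N | j < a i} = range (a i) by ext; simp; omega, card_range]
    simp only [conjPart, card_filter]
    rw [sum_comm]
    simpa only [← card_filter, hrow] using h.sum_range

theorem div_le_one_div_succ (h : IsPartitionOf a m N) (j : ℕ) :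
    (a j : ℝ) / N ≤ 1 / (j + 1) := by
  rcases N.eq_zero_or_pos with rfl | hN
  · simp; positivity
  rw [div_le_div_iff₀ (by positivity) (by positivity), one_mul]
  exact_mod_cast (mul_comm _ _).le.trans (h.succ_mul_le j)

theorem sum_choose_two_div_choose_two (h : IsPartitionOf a m N) (hN : 2 ≤ N) :
    (∑ i ∈ range m, ((a i).choose 2 : ℝ)) / (N.choose 2 : ℝ) =
      (∑ i ∈ range m, ((a i : ℝ) / N) ^ 2 - 1 / N) / (1 - 1 / N) := by
  have hsum : ∑ i ∈ range m, (a i : ℝ) = N := by exact_mod_cast h.sum_range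
  have hN' : (2 : ℝ) ≤ N := by exact_mod_cast hN
  have hsq : ∑ i ∈ range m, ((a i).choose 2 : ℝ) = (∑ i ∈ range m, (a i : ℝ) ^ 2 - N) / 2 := by
    simp only [Nat.cast_choose_two, ← hsum, ← sum_sub_distrib, sum_div]
    exact sum_congr rfl fun i _ => by ring
  rw [hsq]
  simp only [Nat.cast_choose_two, div_pow, ← sum_div]
  have : (N : ℝ) - 1 ≠ 0 := by linarith
  field_simp

end IsPartitionOf

theorem summable_one_div_succ_sq : Summable fun j : ℕ => (1 / ((j : ℝ) + 1)) ^ 2 :=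
  ((summable_nat_add_iff 1).2 (Real.summable_one_div_nat_pow.2 one_lt_two)).congr fun j => by
    push_cast
    rw [div_pow, one_pow]

section PartitionSequence

variable {m N : ℕ → ℕ} {a : ℕ → ℕ → ℕ} {r : ℕ → ℝ}

theorem summable_sq_and_tendsto_sum_sq_div (ha : ∀ n, IsPartitionOf (a n) (m n) (N n))
    (hr : ∀ j, Tendsto (fun n => (a n j : ℝ) / N n) atTop (𝓝 (r j))) :
    Summable (fun j => r j ^ 2) ∧
      Tendsto (fun n => ∑ j ∈ range (m n), ((a n j : ℝ) / N n) ^ 2) atTop (𝓝 (∑' j, r j ^ 2)) := by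
  have hbound : ∀ n j, ((a n j : ℝ) / N n) ^ 2 ≤ (1 / ((j : ℝ) + 1)) ^ 2 := fun n j =>
    pow_le_pow_left₀ (by positivity) ((ha n).div_le_one_div_succ j) 2
  refine ⟨summable_one_div_succ_sq.of_nonneg_of_le (fun j => sq_nonneg _)
    fun j => le_of_tendsto ((hr j).pow 2) (.of_forall fun n => hbound n j), ?_⟩
  have hdom := tendsto_tsum_of_dominated_convergence summable_one_div_succ_sq
    (fun j => (hr j).pow 2) (.of_forall fun n j => by simpa using hbound n j)
  refine hdom.congr fun n => tsum_eq_sum fun j hj => ?_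
  rw [(ha n).eq_zero_of_le j (by simpa using hj)]
  simp

theorem summable_sq_and_tendsto_sum_choose_two_div (hN : Tendsto N atTop atTop)
    (ha : ∀ n, IsPartitionOf (a n) (m n) (N n))
    (hr : ∀ j, Tendsto (fun n => (a n j : ℝ) / N n) atTop (𝓝 (r j))) :
    Summable (fun j => r j ^ 2) ∧
      Tendsto (fun n => (∑ j ∈ range (m n), ((a n j).choose 2 : ℝ)) / (N n).choose 2) atTop
        (𝓝 (∑' j, r j ^ 2)) := by
  obtain ⟨hsummable, hsq⟩ := summable_sq_and_tendsto_sum_sq_div ha hr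
  have hinv : Tendsto (fun n => 1 / (N n : ℝ)) atTop (𝓝 0) :=
    tendsto_one_div_atTop_nhds_zero_nat.comp hN
  have hlim : Tendsto (fun n => (∑ j ∈ range (m n), ((a n j : ℝ) / N n) ^ 2 - 1 / N n) /
      (1 - 1 / N n)) atTop (𝓝 ((∑' j, r j ^ 2 - 0) / (1 - 0))) :=
    (hsq.sub hinv).div (tendsto_const_nhds.sub hinv) (by norm_num)
  rw [sub_zero, sub_zero, div_one] at hlim
  refine ⟨hsummable, hlim.congr' ?_⟩
  filter_upwards [hN.eventually_ge_atTop 2] with n hn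
  exact ((ha n).sum_choose_two_div_choose_two hn).symm

end PartitionSequence

theorem stmt3_general (N k : ℕ → ℕ) (lam : ℕ → ℕ → ℕ)
    (hN : Tendsto N atTop atTop)
    (hanti : ∀ n i j, i ≤ j → lam n j ≤ lam n i)
    (hsupp : ∀ n i, k n ≤ i → lam n i = 0)
    (hsum : ∀ n, ∑ i ∈ Finset.range (k n), lam n i = N n)
    (p q : ℕ → ℝ)
    (hp : ∀ i, Tendsto (fun n => (lam n i : ℝ) / (N n : ℝ)) atTop (𝓝 (p i)))
    (hq : ∀ j, Tendsto
      (fun n => ((((Finset.range (k n)).filter fun i => j < lam n i).card : ℝ)) / (N n : ℝ))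
      atTop (𝓝 (q j))) :
    Summable (fun i => p i ^ 2) ∧ Summable (fun j => q j ^ 2) ∧
      Tendsto
        (fun n =>
          ((∑ i ∈ Finset.range (k n), ((lam n i).choose 2 : ℝ)) -
              ∑ j ∈ Finset.range (N n),
                ((((Finset.range (k n)).filter fun i => j < lam n i).card.choose 2 : ℝ))) /
            ((N n).choose 2 : ℝ))
        atTop (𝓝 ((∑' i, p i ^ 2) - ∑' j, q j ^ 2)) := by
  have hpart : ∀ n, IsPartitionOf (lam n) (k n) (N n) := fun n =>
    ⟨fun i j hij => hanti n i j hij, hsupp n, hsum n⟩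
  obtain ⟨hp2, hrows⟩ := summable_sq_and_tendsto_sum_choose_two_div hN hpart hp
  obtain ⟨hq2, hcols⟩ :=
    summable_sq_and_tendsto_sum_choose_two_div hN (fun n => (hpart n).conjPart_isPartitionOf) hq
  exact ⟨hp2, hq2, (hrows.sub hcols).congr fun n => (sub_div _ _ _).symm⟩

/-- Let `λ_n` be a partition of `N_n` with `N_n → ∞` (written `0`-indexed as antitone functions
`lam n : ℕ → ℕ` supported on `{0, …, k n − 1}` with `Σ_i lam n i = N n`), regarded together
with its conjugate `λ'_n` (here `λ'_{n,j} = #{i : lam n i > j}`) as infinite nonincreasing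
sequences of nonnegative integers.  If `λ_{n,i}/N_n → p_i` for every `i` and
`λ'_{n,j}/N_n → q_j` for every `j`, then
`(Σ_i C(λ_{n,i},2) − Σ_j C(λ'_{n,j},2)) / C(N_n,2) → Σ_i p_i² − Σ_j q_j²`,
and in particular both series converge. -/
theorem stmt3 (N k : ℕ → ℕ) (lam : ℕ → ℕ → ℕ)
    (hN : Tendsto N atTop atTop)
    (hNpos : ∀ n, 0 < N n)
    (hanti : ∀ n i j, i ≤ j → lam n j ≤ lam n i)
    (hsupp : ∀ n i, k n ≤ i → lam n i = 0)
    (hsum : ∀ n, ∑ i ∈ Finset.range (k n), lam n i = N n)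
    (p q : ℕ → ℝ)
    (hp : ∀ i, Tendsto (fun n => (lam n i : ℝ) / (N n : ℝ)) atTop (𝓝 (p i)))
    (hq : ∀ j, Tendsto
      (fun n => ((((Finset.range (k n)).filter fun i => j < lam n i).card : ℝ)) / (N n : ℝ))
      atTop (𝓝 (q j))) :
    Summable (fun i => p i ^ 2) ∧ Summable (fun j => q j ^ 2) ∧
      Tendsto
        (fun n =>
          ((∑ i ∈ Finset.range (k n), ((lam n i).choose 2 : ℝ)) -
              ∑ j ∈ Finset.range (N n),
                ((((Finset.range (k n)).filter fun i => j < lam n i).card.choose 2 : ℝ))) /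
            ((N n).choose 2 : ℝ))
        atTop (𝓝 ((∑' i, p i ^ 2) - ∑' j, q j ^ 2)) :=
  stmt3_general N k lam hN hanti hsupp hsum p q hp hq
end

section
/- Let λ = (λ_1 ≥ λ_2 ≥ … ≥ λ_k > 0) be a partition of N with exactly k parts, and for each cell (i,j) of its Young diagram let h_{i,j} = (λ_i − j) + (λ'_j − i) + 1 be its hooklength. Then ∏_{(i,j)∈λ} h_{i,j} · ∏_{1≤i<j≤k} (λ_i − λ_j − i + j) = ∏_{i=1}^{k} (λ_i + k − i)!. Equivalently, the hooklength formula N!/∏_{(i,j)∈λ} h_{i,j} and the determinant-type formula N! ∏_{1≤i<j≤k}(λ_i − λ_j − i + j) / ∏_{i=1}^k (λ_i + k − i)! give the same value. -/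
/-!
Fix a row `i` and put `m = λ_i + k - i - 1` (0-indexed). The hooklengths `h_{i,j}` of that row
strictly decrease in `j`, the numbers `λ_i - λ_j + j - i` for `i < j < k` strictly increase in
`j`, no value occurs in both lists, and all of them lie in `[1, m]`. Since there are exactly
`λ_i + (k - i - 1) = m` of them, together they enumerate `{1, …, m}`, so the product over row `i`
is `m!`. Multiplying over the rows gives the identity.
-/

open Finset
open scoped Nat

theorem prod_mul_prod_eq_factorial {ι κ : Type*} {s : Finset ι} {t : Finset κ}
    {f : ι → ℕ} {g : κ → ℕ} {m : ℕ} (hf : Set.InjOn f s) (hg : Set.InjOn g t)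
    (hfg : ∀ a ∈ s, ∀ b ∈ t, f a ≠ g b)
    (hfm : ∀ a ∈ s, f a ∈ Ico 1 (m + 1)) (hgm : ∀ b ∈ t, g b ∈ Ico 1 (m + 1))
    (hcard : #s + #t = m) :
    (∏ a ∈ s, f a) * ∏ b ∈ t, g b = m ! := by
  have hdisj : Disjoint (s.image f) (t.image g) := by
    simp only [disjoint_left, mem_image]
    rintro _ ⟨a, ha, rfl⟩ ⟨b, hb, hab⟩
    exact hfg a ha b hb hab.symm
  have hsub : s.image f ∪ t.image g ⊆ Ico 1 (m + 1) := by
    simp only [union_subset_iff, image_subset_iff]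
    exact ⟨hfm, hgm⟩
  have hunion : s.image f ∪ t.image g = Ico 1 (m + 1) := by
    refine eq_of_subset_of_card_le hsub ?_
    rw [card_union_of_disjoint hdisj, card_image_of_injOn hf, card_image_of_injOn hg,
      Nat.card_Ico]
    omega
  rw [← prod_Ico_id_eq_factorial, ← hunion, prod_union hdisj, prod_image hf, prod_image hg]

def colLen (k : ℕ) (lam : ℕ → ℕ) (j : ℕ) : ℕ := #{i ∈ range k | j < lam i}

section colLen

variable {k : ℕ} {lam : ℕ → ℕ}

theorem colLen_le (j : ℕ) : colLen k lam j ≤ k :=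
  (card_filter_le _ _).trans_eq (card_range k)

theorem colLen_antitone : Antitone (colLen k lam) := fun _ _ hab =>
  card_le_card <| monotone_filter_right _ fun _ _ => lt_of_le_of_lt hab

theorem lt_colLen_iff (hanti : Antitone lam) {l j : ℕ} (hl : l < k) :
    l < colLen k lam j ↔ j < lam l := by
  constructor
  · intro h
    by_contra! hlj
    have hsub : {i ∈ range k | j < lam i} ⊆ range l := by
      intro x hx
      simp only [mem_filter, mem_range] at hx ⊢
      by_contra! hlx
      exact absurd (hanti hlx) (by omega)
    have := card_le_card hsub
    rw [card_range] at this
    exact absurd h (not_lt.mpr this)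
  · intro h
    have hsub : range (l + 1) ⊆ {i ∈ range k | j < lam i} := by
      intro x hx
      simp only [mem_filter, mem_range] at hx ⊢
      exact ⟨by omega, lt_of_lt_of_le h (hanti (by omega))⟩
    simpa [colLen] using card_le_card hsub

end colLen

theorem prod_hook_mul_prod_Ioo_eq_factorial {k : ℕ} {lam : ℕ → ℕ} (hanti : Antitone lam)
    {i : ℕ} (hi : i < k) :
    (∏ j ∈ range (lam i), ((lam i - (j + 1)) + (colLen k lam j - (i + 1)) + 1))
      * ∏ j ∈ Ioo i k, (lam i + j - (lam j + i))
    = (lam i + k - (i + 1))! := by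
  have hcol : ∀ j < lam i, i < colLen k lam j := fun j hj => (lt_colLen_iff hanti hi).2 hj
  refine prod_mul_prod_eq_factorial ?_ ?_ ?_ ?_ ?_ ?_
  · refine StrictAntiOn.injOn fun a ha b hb hab => ?_
    simp only [coe_range, Set.mem_Iio] at ha hb
    have := hcol a ha
    have := colLen_antitone (k := k) (lam := lam) hab.le
    omega
  · refine StrictMonoOn.injOn fun a ha b hb hab => ?_
    simp only [coe_Ioo, Set.mem_Ioo] at ha hb
    have := hanti ha.1.le
    have := hanti hab.le
    omega
  · intro a ha b hb
    -- `h_{i,a}` exceeds `λ_i - λ_b + b - i` if the cell `(b, a)` is in the diagram,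
    -- and is below it otherwise
    simp only [mem_range, mem_Ioo] at ha hb
    have := hcol a ha
    have := hanti hb.1.le
    have := lt_colLen_iff hanti (j := a) hb.2
    omega
  · intro a ha
    simp only [mem_range, mem_Ico] at ha ⊢
    have := hcol a ha
    have := colLen_le (k := k) (lam := lam) a
    omega
  · intro b hb
    simp only [mem_Ioo, mem_Ico] at hb ⊢
    have := hanti hb.1.le
    omega
  · rw [card_range, Nat.card_Ioo]
    omega

theorem stmt4_general (k : ℕ) (lam : ℕ → ℕ)
    (hanti : ∀ i j, i ≤ j → lam j ≤ lam i) :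
    (∏ i ∈ Finset.range k, ∏ j ∈ Finset.range (lam i),
        ((lam i - (j + 1)) + (((Finset.range k).filter fun i' => j < lam i').card - (i + 1)) + 1))
      * ∏ i ∈ Finset.range k, ∏ j ∈ Finset.Ioo i k, (lam i + j - (lam j + i))
    = ∏ i ∈ Finset.range k, (lam i + k - (i + 1)).factorial := by
  rw [← prod_mul_distrib]
  exact prod_congr rfl fun i hi => prod_hook_mul_prod_Ioo_eq_factorial hanti (mem_range.mp hi)

/-- For a partition `λ = (λ₁ ≥ … ≥ λ_k > 0)` of `N` with exactly `k` parts (written `0`-indexed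
as `lam : ℕ → ℕ`), with hooklengths `h_{i,j} = (λ_i − j) + (λ'_j − i) + 1` (here `0`-indexed:
the cell `(i,j)` with `j < lam i` has hooklength `(lam i − (j+1)) + (λ'_j − (i+1)) + 1`, where
`λ'_j = #{i : lam i > j}`), one has
`∏_{(i,j)∈λ} h_{i,j} · ∏_{i<j≤k} (λ_i − λ_j − i + j) = ∏_{i=1}^{k} (λ_i + k − i)!`;
equivalently the hooklength formula and the determinant-type formula for `f^λ` agree. -/
theorem stmt4 (N k : ℕ) (hk : 0 < k) (lam : ℕ → ℕ)
    (hanti : ∀ i j, i ≤ j → lam j ≤ lam i)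
    (hpos : ∀ i, i < k → 0 < lam i)
    (hzero : ∀ i, k ≤ i → lam i = 0)
    (hsum : ∑ i ∈ Finset.range k, lam i = N) :
    (∏ i ∈ Finset.range k, ∏ j ∈ Finset.range (lam i),
        ((lam i - (j + 1)) + (((Finset.range k).filter fun i' => j < lam i').card - (i + 1)) + 1))
      * ∏ i ∈ Finset.range k, ∏ j ∈ Finset.Ioo i k, (lam i + j - (lam j + i))
    = ∏ i ∈ Finset.range k, (lam i + k - (i + 1)).factorial :=
  stmt4_general k lam hanti
end

section
/- Let (λ_n) be a sequence of partitions, λ_n a partition of N_n, with N_n → ∞, and set c_n = Σ_{(i,j)∈λ_n} (j − i) and s_n = Σ_{(i,j)∈λ_n} (j − i)². If c_n / C(N_n, 2) → θ as n → ∞, then (4 (N_n − 4)! / N_n!) · ( c_n² − 3 s_n + 2 C(N_n, 2) ) → θ² as n → ∞. -/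
open Finset Filter Topology Polynomial

/-! Write `D_k(x) = x (x - 1) ⋯ (x - k + 1)` for the descending Pochhammer polynomial. For `N ≥ 4`
we have `4 (N - 4)! / N! = 4 / D₄(N)` and `2 C(N, 2) = D₂(N)`, so the expression equals
`(c / C(N, 2))² · D₂(N)² / D₄(N) + 4 (D₂(N) - 3 s) / D₄(N)`. The first ratio compares two monic
quartics and tends to `1`. Every cell lies in the first `N` rows and columns, so `0 ≤ s ≤ N³`,
and the second term is `O(1 / N)`. -/

section YoungDiagram

variable {lam : ℕ → ℕ} {k N : ℕ}

lemma lt_of_mem_cells (hlam : Antitone lam) (hsum : ∑ i ∈ range k, lam i = N)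
    {i j : ℕ} (hi : i < k) (hj : j < lam i) : i < N ∧ j < N := by
  have hrow : lam i ≤ N := hsum ▸ single_le_sum (fun _ _ => Nat.zero_le _) (mem_range.2 hi)
  have hcol : (i + 1) * lam i ≤ N := by
    calc (i + 1) * lam i = #(range (i + 1)) • lam i := by simp
      _ ≤ ∑ t ∈ range (i + 1), lam t :=
          card_nsmul_le_sum _ _ _ fun t ht => hlam (Nat.lt_succ_iff.1 (mem_range.1 ht))
      _ ≤ N := hsum ▸ sum_le_sum_of_subset (range_subset_range.2 hi)
  exact ⟨by nlinarith, by omega⟩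

lemma sum_cells_le_nsmul {M : Type*} [AddCommMonoid M] [PartialOrder M] [IsOrderedAddMonoid M]
    (hsum : ∑ i ∈ range k, lam i = N) (f : ℕ → ℕ → M) (B : M)
    (hf : ∀ i < k, ∀ j < lam i, f i j ≤ B) :
    ∑ i ∈ range k, ∑ j ∈ range (lam i), f i j ≤ N • B := by
  calc ∑ i ∈ range k, ∑ j ∈ range (lam i), f i j
      ≤ ∑ i ∈ range k, lam i • B := sum_le_sum fun i hi => by
        simpa using sum_le_sum fun j hj => hf i (mem_range.1 hi) j (mem_range.1 hj)
    _ = N • B := by rw [← sum_smul, hsum]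

lemma sum_content_sq_le (hlam : Antitone lam) (hsum : ∑ i ∈ range k, lam i = N) :
    ∑ i ∈ range k, ∑ j ∈ range (lam i), ((j : ℤ) - i) ^ 2 ≤ (N : ℤ) ^ 3 := by
  calc _ ≤ N • (N : ℤ) ^ 2 := sum_cells_le_nsmul hsum _ _ fun i hi j hj => by
        obtain ⟨hiN, hjN⟩ := lt_of_mem_cells hlam hsum hi hj
        exact sq_le_sq' (by omega) (by omega)
    _ = (N : ℤ) ^ 3 := by rw [nsmul_eq_mul]; ring

end YoungDiagram

lemma tendsto_eval_div_descPochhammer_of_natDegree_lt {P : ℝ[X]} {k : ℕ} (h : P.natDegree < k) :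
    Tendsto (fun x => P.eval x / (descPochhammer ℝ k).eval x) atTop (𝓝 0) := by
  refine div_tendsto_atTop_zero_of_degree_lt _ _ (degree_lt_degree ?_)
  rwa [descPochhammer_natDegree]

lemma tendsto_eval_div_descPochhammer_of_monic {P : ℝ[X]} {k : ℕ} (hP : P.Monic)
    (h : P.natDegree = k) :
    Tendsto (fun x => P.eval x / (descPochhammer ℝ k).eval x) atTop (𝓝 1) := by
  have := div_tendsto_atTop_leadingCoeff_div_of_degree_eq P (descPochhammer ℝ k) (by
    rw [degree_eq_natDegree hP.ne_zero, degree_eq_natDegree (monic_descPochhammer ℝ k).ne_zero,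
      descPochhammer_natDegree, h])
  simpa [hP.leadingCoeff, (monic_descPochhammer ℝ k).leadingCoeff] using this

lemma factorial_sub_div_factorial {n k : ℕ} (h : k ≤ n) :
    ((n - k).factorial : ℝ) / n.factorial = ((descPochhammer ℝ k).eval (n : ℝ))⁻¹ := by
  rw [descPochhammer_eval_eq_descFactorial, ← Nat.factorial_mul_descFactorial h, Nat.cast_mul,
    div_mul_cancel_left₀ (by positivity)]

lemma tendsto_four_div_descPochhammer_mul {ι : Type*} {l : Filter ι} {x c s : ι → ℝ} {θ : ℝ}
    (hx : Tendsto x l atTop) (hs : ∀ᶠ i in l, |s i| ≤ x i ^ 3)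
    (hθ : Tendsto (fun i => c i / ((descPochhammer ℝ 2).eval (x i) / 2)) l (𝓝 θ)) :
    Tendsto (fun i => 4 / (descPochhammer ℝ 4).eval (x i) *
      (c i ^ 2 - 3 * s i + (descPochhammer ℝ 2).eval (x i))) l (𝓝 (θ ^ 2)) := by
  have hsq : Tendsto (fun i => (descPochhammer ℝ 2).eval (x i) ^ 2 /
      (descPochhammer ℝ 4).eval (x i)) l (𝓝 1) := by
    simpa [Function.comp_def, eval_pow] using (tendsto_eval_div_descPochhammer_of_monic
      ((monic_descPochhammer ℝ 2).pow 2) (by rw [natDegree_pow, descPochhammer_natDegree])).comp hx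
  have htwo : Tendsto (fun i => (descPochhammer ℝ 2).eval (x i) /
      (descPochhammer ℝ 4).eval (x i)) l (𝓝 0) :=
    (tendsto_eval_div_descPochhammer_of_natDegree_lt
      (by rw [descPochhammer_natDegree]; norm_num)).comp hx
  have hcube : Tendsto (fun i => x i ^ 3 / (descPochhammer ℝ 4).eval (x i)) l (𝓝 0) := by
    have := (tendsto_eval_div_descPochhammer_of_natDegree_lt
      (P := (X : ℝ[X]) ^ 3) (k := 4) (by rw [natDegree_X_pow]; norm_num)).comp hx
    simp only [Function.comp_def, eval_pow, eval_X] at this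
    exact this
  have hpos : ∀ᶠ i in l, 0 < (descPochhammer ℝ 2).eval (x i) ∧
      0 < (descPochhammer ℝ 4).eval (x i) :=
    (hx.eventually_gt_atTop 3).mono fun i hi =>
      ⟨descPochhammer_pos (by push_cast; linarith), descPochhammer_pos (by push_cast; linarith)⟩
  have hs' : Tendsto (fun i => s i / (descPochhammer ℝ 4).eval (x i)) l (𝓝 0) := by
    refine squeeze_zero_norm' ?_ hcube
    filter_upwards [hs, hpos] with i hsi hD
    rw [Real.norm_eq_abs, abs_div, abs_of_pos hD.2]
    exact div_le_div_of_nonneg_right hsi hD.2.le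
  have hlim := ((hθ.pow 2).mul hsq).add ((htwo.const_mul 4).sub (hs'.const_mul 12))
  simp only [mul_one, mul_zero, sub_zero, add_zero] at hlim
  refine hlim.congr' ?_
  filter_upwards [hpos] with i hD
  field_simp [hD.1.ne', hD.2.ne']
  ring

theorem stmt5_general (N k : ℕ → ℕ) (lam : ℕ → ℕ → ℕ)
    (hN : Tendsto N atTop atTop)
    (hanti : ∀ n i j, i ≤ j → lam n j ≤ lam n i)
    (hsum : ∀ n, ∑ i ∈ Finset.range (k n), lam n i = N n)
    (c s : ℕ → ℤ)
    (hs : ∀ n, s n = ∑ i ∈ Finset.range (k n), ∑ j ∈ Finset.range (lam n i),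
      ((j : ℤ) - (i : ℤ)) ^ 2)
    (θ : ℝ)
    (hθ : Tendsto (fun n => (c n : ℝ) / ((N n).choose 2 : ℝ)) atTop (𝓝 θ)) :
    Tendsto
      (fun n =>
        (4 * ((N n - 4).factorial : ℝ) / ((N n).factorial : ℝ)) *
          ((c n : ℝ) ^ 2 - 3 * (s n : ℝ) + 2 * ((N n).choose 2 : ℝ)))
      atTop (𝓝 (θ ^ 2)) := by
  have hchoose (n : ℕ) : ((N n).choose 2 : ℝ) = (descPochhammer ℝ 2).eval (N n : ℝ) / 2 := by
    simp [Nat.cast_choose_eq_descPochhammer_div]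
  have hsN (n : ℕ) : |(s n : ℝ)| ≤ (N n : ℝ) ^ 3 := by
    have hs₀ : 0 ≤ s n := hs n ▸ by positivity
    have hs₁ : s n ≤ (N n : ℤ) ^ 3 := hs n ▸ sum_content_sq_le (fun _ _ h => hanti n _ _ h) (hsum n)
    rw [abs_of_nonneg (by exact_mod_cast hs₀)]
    exact_mod_cast hs₁
  refine (tendsto_four_div_descPochhammer_mul (tendsto_natCast_atTop_atTop.comp hN)
    (Eventually.of_forall hsN) (by simpa only [hchoose, Function.comp_apply] using hθ)).congr' ?_
  filter_upwards [hN.eventually_ge_atTop 4] with n hn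
  rw [mul_div_assoc, factorial_sub_div_factorial hn, hchoose]
  simp only [Function.comp_apply]
  ring

/-- Let `λ_n` be a partition of `N_n` with `N_n → ∞` (written `0`-indexed as antitone functions
`lam n : ℕ → ℕ` supported on `{0, …, k n − 1}` with `Σ_i lam n i = N n`), and set
`c_n = Σ_{(i,j)∈λ_n} (j−i)` and `s_n = Σ_{(i,j)∈λ_n} (j−i)²`.  If `c_n / C(N_n,2) → θ`, then
`(4 (N_n−4)! / N_n!) · (c_n² − 3 s_n + 2 C(N_n,2)) → θ²`. -/
theorem stmt5 (N k : ℕ → ℕ) (lam : ℕ → ℕ → ℕ)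
    (hN : Tendsto N atTop atTop)
    (hNpos : ∀ n, 0 < N n)
    (hanti : ∀ n i j, i ≤ j → lam n j ≤ lam n i)
    (hsupp : ∀ n i, k n ≤ i → lam n i = 0)
    (hsum : ∀ n, ∑ i ∈ Finset.range (k n), lam n i = N n)
    (c s : ℕ → ℤ)
    (hc : ∀ n, c n = ∑ i ∈ Finset.range (k n), ∑ j ∈ Finset.range (lam n i),
      ((j : ℤ) - (i : ℤ)))
    (hs : ∀ n, s n = ∑ i ∈ Finset.range (k n), ∑ j ∈ Finset.range (lam n i),
      ((j : ℤ) - (i : ℤ)) ^ 2)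
    (θ : ℝ)
    (hθ : Tendsto (fun n => (c n : ℝ) / ((N n).choose 2 : ℝ)) atTop (𝓝 θ)) :
    Tendsto
      (fun n =>
        (4 * ((N n - 4).factorial : ℝ) / ((N n).factorial : ℝ)) *
          ((c n : ℝ) ^ 2 - 3 * (s n : ℝ) + 2 * ((N n).choose 2 : ℝ)))
      atTop (𝓝 (θ ^ 2)) :=
  stmt5_general N k lam hN hanti hsum c s hs θ hθ
end

section
/- For all real numbers t and x, the series Σ_{n=0}^{∞} (t^n / n!) He_n(x) converges and equals exp(t x − t²/2), where He_n is the probabilists' Hermite polynomial. -/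
/-!
Write `exp (t x - t²/2) = exp (t x) · exp (-t²/2)` and multiply the two exponential series
as a Cauchy product, the second one spread over the even indices as a series in `t`.
The `n`-th term of the product is `tⁿ/n!` times `Σₖ cₙₖ xᵏ`, where for `n = 2m + k`
`cₙₖ = n! (-1/2)ᵐ / (m! k!) = (-1)ᵐ (2m-1)!! C(n, k)`, which is Mathlib's explicit formula for the
coefficients of `Heₙ`; for `n - k` odd both sides vanish.
-/

open Finset Polynomial
open scoped Nat

theorem Nat.factorial_two_mul (m : ℕ) : (2 * m)! = 2 ^ m * m ! * (2 * m - 1)‼ := by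
  rcases m with _ | m
  · rfl
  · rw [show 2 * (m + 1) = 2 * m + 1 + 1 by ring, Nat.factorial_eq_mul_doubleFactorial,
      ← Nat.doubleFactorial_two_mul]
    rfl

theorem HasSum.mul_antidiagonal_of_summable_norm {R : Type*} [NormedRing R] [CompleteSpace R]
    {f g : ℕ → R} {a b : R} (hf : HasSum f a) (hg : HasSum g b)
    (hf' : Summable fun n => ‖f n‖) (hg' : Summable fun n => ‖g n‖) :
    HasSum (fun n => ∑ kl ∈ antidiagonal n, f kl.1 * g kl.2) (a * b) := by
  rw [← hf.tsum_eq, ← hg.tsum_eq, tsum_mul_tsum_eq_tsum_sum_antidiagonal_of_summable_norm hf' hg']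
  exact (summable_norm_sum_mul_antidiagonal_of_summable_norm hf' hg').of_norm.hasSum

theorem Real.hasSum_pow_div_factorial (u : ℝ) : HasSum (fun n => u ^ n / n !) (Real.exp u) :=
  Real.exp_eq_exp_ℝ ▸ NormedSpace.expSeries_div_hasSum_exp u

noncomputable def evenExpSeries (u : ℝ) (j : ℕ) : ℝ := if Even j then u ^ (j / 2) / (j / 2)! else 0

theorem evenExpSeries_two_mul (u : ℝ) (m : ℕ) : evenExpSeries u (2 * m) = u ^ m / m ! := by
  simp [evenExpSeries]

theorem evenExpSeries_of_not_even {u : ℝ} {j : ℕ} (hj : ¬ Even j) : evenExpSeries u j = 0 :=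
  if_neg hj

theorem evenExpSeries_eq_zero_of_notMem_range {u : ℝ} {j : ℕ} (hj : j ∉ Set.range (2 * ·)) :
    evenExpSeries u j = 0 :=
  evenExpSeries_of_not_even fun ⟨r, hr⟩ => hj ⟨r, (two_mul r).trans hr.symm⟩

theorem hasSum_evenExpSeries (u : ℝ) : HasSum (evenExpSeries u) (Real.exp u) := by
  rw [← (mul_right_injective₀ two_ne_zero).hasSum_iff
    fun _ => evenExpSeries_eq_zero_of_notMem_range]
  simpa only [Function.comp_def, evenExpSeries_two_mul] using Real.hasSum_pow_div_factorial u

theorem summable_norm_evenExpSeries (u : ℝ) : Summable fun j => ‖evenExpSeries u j‖ := by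
  rw [← (mul_right_injective₀ two_ne_zero).summable_iff
    fun _ hj => by rw [evenExpSeries_eq_zero_of_notMem_range hj, norm_zero]]
  simpa only [Function.comp_def, evenExpSeries_two_mul] using
    NormedSpace.norm_expSeries_div_summable u

theorem coeff_hermite_two_mul_add_div_factorial (m k : ℕ) :
    ((hermite (2 * m + k)).coeff k : ℝ) / (2 * m + k)! = (-1 / 2) ^ m / m ! / k ! := by
  have hchoose : ((2 * m + k).choose k : ℝ) * (2 * m)! * k ! = (2 * m + k)! := by
    exact_mod_cast Nat.add_choose_mul_factorial_mul_factorial ..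
  have hfact : ((2 * m)! : ℝ) = 2 ^ m * m ! * (2 * m - 1)‼ := by
    exact_mod_cast Nat.factorial_two_mul m
  rw [coeff_hermite_explicit, ← hchoose, hfact]
  push_cast
  have : (0 : ℝ) < (2 * m - 1)‼ := by exact_mod_cast Nat.doubleFactorial_pos _
  have : (0 : ℝ) < (2 * m + k).choose k := by exact_mod_cast Nat.choose_pos (by omega)
  field_simp
  rw [← mul_pow]
  norm_num

theorem pow_div_factorial_mul_coeff_hermite (t x : ℝ) {n k : ℕ} (hk : k ≤ n) :
    t ^ n / n ! * ((hermite n).coeff k * x ^ k) =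
      (t * x) ^ k / k ! * evenExpSeries (-t ^ 2 / 2) (n - k) := by
  by_cases h : Even (n - k)
  · obtain ⟨m, hm⟩ := h
    obtain rfl : n = 2 * m + k := by omega
    calc _ = t ^ (2 * m + k) * x ^ k * ((hermite (2 * m + k)).coeff k / (2 * m + k)! : ℝ) := by
          ring
      _ = _ := by
          rw [coeff_hermite_two_mul_add_div_factorial, Nat.add_sub_cancel, evenExpSeries_two_mul]
          ring
  · have hodd : Odd (n + k) := Nat.odd_iff.mpr (by have := Nat.even_iff.not.mp h; omega)
    rw [coeff_hermite_of_odd_add hodd, evenExpSeries_of_not_even h]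
    simp

theorem pow_div_factorial_mul_aeval_hermite (t x : ℝ) (n : ℕ) :
    t ^ n / n ! * aeval x (hermite n) =
      ∑ kl ∈ antidiagonal n, (t * x) ^ kl.1 / kl.1 ! * evenExpSeries (-t ^ 2 / 2) kl.2 := by
  rw [aeval_eq_sum_range, natDegree_hermite, mul_sum, Nat.sum_antidiagonal_eq_sum_range_succ_mk]
  refine sum_congr rfl fun k hk => ?_
  rw [zsmul_eq_mul]
  exact pow_div_factorial_mul_coeff_hermite t x (Nat.lt_succ_iff.mp (mem_range.mp hk))

/-- For all real `t` and `x`, the series `Σ_{n=0}^∞ (tⁿ/n!) Heₙ(x)` converges and equals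
`exp(t x − t²/2)`, where `Heₙ` is the probabilists' Hermite polynomial. -/
theorem stmt9 (t x : ℝ) :
    HasSum (fun n : ℕ => t ^ n / n.factorial * Polynomial.aeval x (Polynomial.hermite n))
      (Real.exp (t * x - t ^ 2 / 2)) := by
  have h := (Real.hasSum_pow_div_factorial (t * x)).mul_antidiagonal_of_summable_norm
    (hasSum_evenExpSeries (-t ^ 2 / 2)) (NormedSpace.norm_expSeries_div_summable _)
    (summable_norm_evenExpSeries _)
  rw [show t * x - t ^ 2 / 2 = t * x + -t ^ 2 / 2 by ring, Real.exp_add]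
  simpa only [pow_div_factorial_mul_aeval_hermite] using h
end

section
/- Let γ be the standard Gaussian measure on ℝ. For all nonnegative integers m and n, ∫ He_m(x) He_n(x) dγ(x) equals n! if m = n and equals 0 otherwise, where He_n is the probabilists' Hermite polynomial. -/
/-!
Gaussian integration by parts, `∫ x p(x) dγ = ∫ p'(x) dγ`, says that `X - D` is the adjoint of the
derivative `D` on polynomials in `L²(γ)`. Since `Heₙ = (X - D)ⁿ 1`, this gives
`∫ q Heₙ dγ = ∫ Dⁿ q dγ` for every polynomial `q`. For `q = Heₘ` the right side vanishes when
`m < n` because `Heₘ` has degree `m`, and equals `n!` when `m = n` because `Heₙ` is monic.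
-/

open MeasureTheory ProbabilityTheory Polynomial
open scoped NNReal

namespace Polynomial

lemma iterate_derivative_natDegree {R : Type*} [Semiring R] (p : R[X]) :
    derivative^[p.natDegree] p = C (p.natDegree.factorial • p.leadingCoeff) := by
  have hdeg : (derivative^[p.natDegree] p).natDegree ≤ 0 :=
    (natDegree_iterate_derivative p _).trans (Nat.sub_self _).le
  rw [eq_C_of_natDegree_le_zero hdeg, coeff_iterate_derivative, zero_add,
    Nat.descFactorial_self, leadingCoeff]

lemma map_hermite_eq_iterate (n : ℕ) :
    (hermite n).map (algebraMap ℤ ℝ) = (fun p ↦ X * p - derivative p)^[n] 1 := by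
  induction n with
  | zero => simp
  | succ n ih =>
    rw [hermite_succ, Polynomial.map_sub, Polynomial.map_mul, Polynomial.map_X,
      ← derivative_map, ih, Function.iterate_succ_apply']

end Polynomial

namespace ProbabilityTheory

variable {μ : ℝ} {v : ℝ≥0}

lemma integrable_eval_gaussianReal (p : ℝ[X]) :
    Integrable (fun x ↦ p.eval x) (gaussianReal μ v) := by
  induction p using Polynomial.induction_on' with
  | add p q hp hq => simpa only [eval_add] using hp.fun_add hq
  | monomial n a =>
    have hpow : Integrable (fun x : ℝ ↦ x ^ n) (gaussianReal μ v) :=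
      ((memLp_id_gaussianReal n).integrable_norm_pow').mono' (by fun_prop)
        (ae_of_all _ fun x ↦ by simp)
    simpa using hpow.const_mul a

lemma integrable_gaussianPDFReal_mul_eval (hv : v ≠ 0) (p : ℝ[X]) :
    Integrable (fun x ↦ gaussianPDFReal μ v x * p.eval x) := by
  have h := integrable_eval_gaussianReal (μ := μ) (v := v) p
  rw [gaussianReal_of_var_ne_zero _ hv, integrable_withDensity_iff_integrable_smul'
    (measurable_gaussianPDF _ _) (ae_of_all _ fun _ ↦ gaussianPDF_lt_top)] at h
  simpa [toReal_gaussianPDF] using h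

lemma hasDerivAt_gaussianPDFReal (x : ℝ) :
    HasDerivAt (gaussianPDFReal μ v) (-((x - μ) / v) * gaussianPDFReal μ v x) x := by
  have h : HasDerivAt (fun x ↦ -(x - μ) ^ 2 / (2 * v)) (-((x - μ) / v)) x := by
    refine ((((hasDerivAt_id x).sub_const μ).pow 2).neg.div_const (2 * (v : ℝ))).congr_deriv ?_
    field_simp
    simp
  rw [gaussianPDFReal_def]
  exact (h.exp.const_mul _).congr_deriv (by dsimp only; ring)

lemma integral_sub_mul_eval_gaussianReal (p : ℝ[X]) :
    ∫ x, (x - μ) * p.eval x ∂gaussianReal μ v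
      = v * ∫ x, (derivative p).eval x ∂gaussianReal μ v := by
  rcases eq_or_ne v 0 with rfl | hv
  · simp
  have hibp := integral_mul_deriv_eq_deriv_mul_of_integrable (u := fun x ↦ p.eval x)
    (v := gaussianPDFReal μ v) (fun x _ ↦ p.hasDerivAt x) (fun x _ ↦ hasDerivAt_gaussianPDFReal x)
    ((integrable_gaussianPDFReal_mul_eval hv (C (-(v : ℝ)⁻¹) * (X - C μ) * p)).congr
      (ae_of_all _ fun x ↦ by simp only [eval_mul, eval_sub, eval_C, eval_X, Pi.mul_apply]; ring))
    ((integrable_gaussianPDFReal_mul_eval hv _).congr (ae_of_all _ fun x ↦ mul_comm _ _))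
    ((integrable_gaussianPDFReal_mul_eval hv _).congr (ae_of_all _ fun x ↦ mul_comm _ _))
  simp only [integral_gaussianReal_eq_integral_smul hv, smul_eq_mul]
  calc ∫ x, gaussianPDFReal μ v x * ((x - μ) * p.eval x)
      = -v * ∫ x, p.eval x * (-((x - μ) / v) * gaussianPDFReal μ v x) := by
        rw [← integral_const_mul]
        congr 1 with x
        field_simp
    _ = v * ∫ x, (derivative p).eval x * gaussianPDFReal μ v x := by rw [hibp]; ring
    _ = v * ∫ x, gaussianPDFReal μ v x * (derivative p).eval x := by simp_rw [mul_comm (eval _ _)]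

lemma integral_eval_mul_X_mul_sub_derivative_gaussianReal (q p : ℝ[X]) :
    ∫ x, (q * (X * p - derivative p)).eval x ∂gaussianReal 0 1
      = ∫ x, (derivative q * p).eval x ∂gaussianReal 0 1 := by
  have hstein : ∫ x, (X * (q * p)).eval x ∂gaussianReal 0 1
      = ∫ x, (derivative q * p).eval x ∂gaussianReal 0 1
        + ∫ x, (q * derivative p).eval x ∂gaussianReal 0 1 := by
    rw [← integral_add (integrable_eval_gaussianReal _) (integrable_eval_gaussianReal _)]
    simpa using integral_sub_mul_eval_gaussianReal (μ := 0) (v := 1) (q * p)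
  rw [mul_sub, mul_left_comm]
  simp only [eval_sub]
  rw [integral_sub (integrable_eval_gaussianReal _) (integrable_eval_gaussianReal _), hstein]
  ring

lemma integral_eval_mul_iterate_X_mul_sub_derivative_gaussianReal (q p : ℝ[X]) (n : ℕ) :
    ∫ x, (q * (fun p ↦ X * p - derivative p)^[n] p).eval x ∂gaussianReal 0 1
      = ∫ x, (derivative^[n] q * p).eval x ∂gaussianReal 0 1 := by
  induction n generalizing q with
  | zero => rfl
  | succ n ih =>
    rw [Function.iterate_succ_apply', integral_eval_mul_X_mul_sub_derivative_gaussianReal, ih,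
      Function.iterate_succ_apply]

lemma integral_eval_mul_map_hermite_gaussianReal (q : ℝ[X]) (n : ℕ) :
    ∫ x, (q * (hermite n).map (algebraMap ℤ ℝ)).eval x ∂gaussianReal 0 1
      = ∫ x, (derivative^[n] q).eval x ∂gaussianReal 0 1 := by
  rw [map_hermite_eq_iterate, integral_eval_mul_iterate_X_mul_sub_derivative_gaussianReal, mul_one]

lemma integral_eval_map_hermite_mul_of_lt {m n : ℕ} (hmn : m < n) :
    ∫ x, ((hermite m).map (algebraMap ℤ ℝ) * (hermite n).map (algebraMap ℤ ℝ)).eval x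
      ∂gaussianReal 0 1 = 0 := by
  rw [integral_eval_mul_map_hermite_gaussianReal, iterate_derivative_eq_zero]
  · simp
  · rwa [(hermite_monic m).natDegree_map, natDegree_hermite]

lemma integral_eval_map_hermite_mul_self (n : ℕ) :
    ∫ x, ((hermite n).map (algebraMap ℤ ℝ) * (hermite n).map (algebraMap ℤ ℝ)).eval x
      ∂gaussianReal 0 1 = n.factorial := by
  have hderiv := iterate_derivative_natDegree ((hermite n).map (algebraMap ℤ ℝ))
  rw [(hermite_monic n).natDegree_map, natDegree_hermite, ((hermite_monic n).map _).leadingCoeff]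
    at hderiv
  rw [integral_eval_mul_map_hermite_gaussianReal, hderiv]
  simp

end ProbabilityTheory

/-- Orthogonality of the probabilists' Hermite polynomials with respect to the standard
Gaussian measure `γ` on `ℝ`: `∫ Heₘ(x) Heₙ(x) dγ(x)` is `n!` when `m = n` and `0` otherwise. -/
theorem stmt10 (m n : ℕ) :
    ∫ x, Polynomial.aeval x (Polynomial.hermite m) * Polynomial.aeval x (Polynomial.hermite n)
        ∂(gaussianReal 0 1) = if m = n then (n.factorial : ℝ) else 0 := by
  simp only [← eval_map_algebraMap, ← eval_mul]
  rcases lt_trichotomy m n with hmn | rfl | hnm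
  · rw [integral_eval_map_hermite_mul_of_lt hmn, if_neg hmn.ne]
  · rw [integral_eval_map_hermite_mul_self, if_pos rfl]
  · rw [mul_comm, integral_eval_map_hermite_mul_of_lt hnm, if_neg hnm.ne']
end

section
/- Fix an integer K ≥ 2, nonnegative integers η_1, …, η_{K−1}, and set λ̄_i = Σ_{h=i}^{K−1} (2η_h + 1) for 1 ≤ i ≤ K (so λ̄_K = 0). Then for every integer r ≥ 0, r! · Σ_δ [ det( 1 / (δ_j + (λ̄_i − λ̄_j + j − i)/2)! )_{1≤i,j≤K} · ∏_{1≤i<j≤K} (λ̄_i − λ̄_j − 2δ_i + 2δ_j + j − i) / (λ̄_i − λ̄_j + j − i) ] = K^r, where the sum is over all K-tuples δ = (δ_1, …, δ_K) of nonnegative integers with δ_1 + … + δ_K = r and δ_i ≤ δ_{i+1} + η_i for 1 ≤ i ≤ K − 1, and with the convention that 1/m! = 0 whenever m is a negative integer. -/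
open Finset

attribute [local instance] Classical.propDecidable

/-- `invFact m = 1/m!`, with the convention that `1/m! = 0` for negative integers `m`. -/
noncomputable def invFact (m : ℤ) : ℚ :=
  if 0 ≤ m then ((m.toNat).factorial : ℚ)⁻¹ else 0

/-- `lambar K η i = λ̄_i = Σ_{h=i}^{K−2} (2 η_h + 1)` (`0`-indexed), so `λ̄_{K−1} = 0`. -/
def lambar (K : ℕ) (η : ℕ → ℕ) (i : ℕ) : ℕ :=
  ∑ h ∈ Finset.Ico i (K - 1), (2 * η h + 1)

/-!
Put `b i = lambarHalf K η i = Σ_{h=i}^{K-2} (η h + 1)`, so that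
`λ̄_i - λ̄_j + j - i = 2 (b i - b j)`, and `z = b - δ`. Then the condition on `δ` says exactly
that `z` is strictly decreasing, the determinant is `det (1 / (b i - z j)!)`, and the product is
`Δ z / Δ b`, where `Δ` is the Vandermonde determinant. Let `S r` be the sum of `det (1 / (b i - z j)!) * Δ z` over these `z`.
Two identities give `(r + 1) S (r + 1) = K S r`:
* since `1 / (m - 1)! = m / m!`, raising `z k` by one for each `k` in turn and summing the
  determinants multiplies `det (1 / (b i - z j)!)` by `Σ (b i - z i)`; this is an instance of
  `Σ_k det (M with column k replaced by column k of D M) = tr D * det M`;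
* the Vandermonde determinant is discretely harmonic: `Σ_k Δ (z - e_k) = K Δ z`.
Matching `z` with `z + e_k`, the terms that leave the range of summation vanish: two columns of
the matrix coincide, `z - e_k` has a repeated entry, or (when `z k = b k`) the matrix has a zero
block. Since `S 0 = Δ b`, this gives `r! S r = K ^ r Δ b`.
-/

namespace Matrix

variable {R : Type*} [CommRing R]

section

variable {n : Type*} [Fintype n] [DecidableEq n]

theorem sum_det_updateCol_mul (M D : Matrix n n R) :
    ∑ k, (M.updateCol k fun i => (D * M) i k).det = D.trace * M.det := by
  have hcramer (k : n) : (M.updateCol k fun i => (D * M) i k).det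
      = (M.adjugate * (D * M)) k k := by
    rw [← cramer_apply, cramer_eq_adjugate_mulVec, mul_apply, mulVec, dotProduct]
  rw [Finset.sum_congr rfl fun k _ => hcramer k]
  change (M.adjugate * (D * M)).trace = _
  rw [← Matrix.mul_assoc, trace_mul_comm, ← Matrix.mul_assoc, mul_adjugate,
    smul_mul, Matrix.one_mul, trace_smul, smul_eq_mul, mul_comm]

theorem sum_det_updateRow_mul (M D : Matrix n n R) :
    ∑ k, (M.updateRow k ((M * D) k)).det = D.trace * M.det := by
  rw [← det_transpose M, ← trace_transpose D, ← sum_det_updateCol_mul]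
  refine Finset.sum_congr rfl fun k _ => ?_
  rw [← det_transpose, ← updateCol_transpose, ← transpose_mul]
  rfl

theorem sum_det_updateCol_add_mul (M : Matrix n n R) (p q : n → R) :
    ∑ k, (M.updateCol k fun i => (p i + q k) * M i k).det = (∑ i, p i + ∑ i, q i) * M.det := by
  have hsplit (k : n) : (M.updateCol k fun i => (p i + q k) * M i k).det
      = (M.updateCol k fun i => (diagonal p * M) i k).det + q k * M.det := by
    have : (fun i => (p i + q k) * M i k)
        = (fun i => (diagonal p * M) i k) + q k • fun i => M i k := by
      ext i; simp [diagonal_mul, add_mul]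
    rw [this, det_updateCol_add, det_updateCol_smul, updateCol_eq_self]
  rw [Finset.sum_congr rfl fun k _ => hsplit k, Finset.sum_add_distrib, sum_det_updateCol_mul,
    trace_diagonal, ← Finset.sum_mul, add_mul]

end

theorem sum_det_vandermonde_add_single {n : ℕ} (v : Fin n → R) (c : R) :
    ∑ k, (vandermonde (v + Pi.single k c)).det = n * (vandermonde v).det := by
  let P : Matrix (Fin n) (Fin n) R := of fun m j => ((j : ℕ).choose m : R) * c ^ ((j : ℕ) - m)
  have hrow (x : R) (j : Fin n) : ∑ m : Fin n, x ^ (m : ℕ) * P m j = (x + c) ^ (j : ℕ) := by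
    change ∑ m : Fin n, x ^ (m : ℕ) * (((j : ℕ).choose m : R) * c ^ ((j : ℕ) - m)) = _
    rw [add_pow,
      Fin.sum_univ_eq_sum_range (fun m => x ^ m * ((j : ℕ).choose m * c ^ ((j : ℕ) - m)))]
    refine (Finset.sum_subset (Finset.range_subset_range.2 j.isLt) fun m _ hm => ?_).symm.trans
      (Finset.sum_congr rfl fun m _ => by ring)
    rw [Finset.mem_range, not_lt] at hm
    simp [Nat.choose_eq_zero_of_lt (Nat.lt_of_succ_le hm)]
  have hupd (k : Fin n) :
      vandermonde (v + Pi.single k c) = (vandermonde v).updateRow k ((vandermonde v * P) k) := by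
    ext i j
    rcases eq_or_ne i k with rfl | hik
    · simp [mul_apply, hrow]
    · simp [hik]
  have htrace : P.trace = n := by simp [P, trace]
  simp only [hupd, sum_det_updateRow_mul, htrace]

theorem det_eq_zero_of_forall_le_le {n : ℕ}
    (M : Matrix (Fin n) (Fin n) R) (k : Fin n) (h : ∀ i j, j ≤ k → k ≤ i → M i j = 0) :
    M.det = 0 := by
  refine M.det_apply ▸ Finset.sum_eq_zero fun σ _ => ?_
  -- `σ` cannot send the `k + 1` indices `j ≤ k` into the `k` indices below `k`
  obtain ⟨j, hjk, hkσ⟩ : ∃ j ≤ k, k ≤ σ j := by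
    by_contra! hcon
    have := Finset.card_le_card_of_injOn σ
      (fun j hj => Finset.mem_Iio.2 (hcon j (Finset.mem_Iic.1 hj))) σ.injective.injOn
    simp at this
  rw [Finset.prod_eq_zero (f := fun i => M (σ i) i) (Finset.mem_univ j) (h _ _ hjk hkσ), smul_zero]

theorem intCast_det_vandermonde {n : ℕ} (v : Fin n → ℤ) :
    (((vandermonde v).det : ℤ) : R) = (vandermonde fun i => (v i : R)).det := by
  simp [det_vandermonde]

end Matrix

theorem Fin.strictAnti_iff_lt_of_val_eq_add_one {α : Type*} [Preorder α] {n : ℕ}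
    {f : Fin n → α} : StrictAnti f ↔ ∀ i j : Fin n, (j : ℕ) = i + 1 → f j < f i := by
  refine ⟨fun hf i j h => hf (Fin.lt_def.2 (by omega)), fun h => ?_⟩
  suffices ∀ d (i j : Fin n), (j : ℕ) = i + d + 1 → f j < f i from
    fun i j hij => this (j - i - 1) i j (by have := Fin.lt_def.1 hij; omega)
  intro d
  induction d with
  | zero => exact h
  | succ d ih =>
    intro i j hj
    exact (h ⟨i + d + 1, by omega⟩ j (by simp only; omega)).trans (ih i _ rfl)

theorem Finset.prod_ite_lt_div_eq_det_vandermonde_div {F : Type*} [Field F] {n : ℕ}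
    (x y : Fin n → F) :
    ∏ i, ∏ j, (if i < j then (x i - x j) / (y i - y j) else 1)
      = (Matrix.vandermonde x).det / (Matrix.vandermonde y).det := by
  simp only [Matrix.det_vandermonde, ← prod_div_distrib, ← prod_filter, filter_lt_eq_Ioi]
  refine prod_congr rfl fun i _ => prod_congr rfl fun j _ => ?_
  rw [← neg_div_neg_eq, neg_sub, neg_sub]

theorem invFact_of_neg {m : ℤ} (hm : m < 0) : invFact m = 0 := by
  simp [invFact, not_le.2 hm]

theorem invFact_zero : invFact 0 = 1 := by
  simp [invFact]

theorem invFact_sub_one (m : ℤ) : invFact (m - 1) = m * invFact m := by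
  rcases lt_trichotomy m 0 with hm | rfl | hm
  · rw [invFact_of_neg (by omega), invFact_of_neg hm, mul_zero]
  · simp [invFact_of_neg]
  · obtain ⟨k, rfl⟩ : ∃ k : ℕ, m = k + 1 := ⟨(m - 1).toNat, by omega⟩
    have hk : ((k : ℤ) + 1).toNat = k + 1 := by omega
    simp only [invFact, add_sub_cancel_right, hk, Int.toNat_natCast, Nat.factorial_succ,
      if_pos (by omega : (0 : ℤ) ≤ k), if_pos (by omega : (0 : ℤ) ≤ k + 1)]
    push_cast
    field_simp

section

variable {n : ℕ}

noncomputable def invFactMatrix (b z : Fin n → ℤ) : Matrix (Fin n) (Fin n) ℚ :=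
  Matrix.of fun i j => invFact (b i - z j)

theorem sum_det_invFactMatrix_add_single (b z : Fin n → ℤ) :
    ∑ k, (invFactMatrix b (z + Pi.single k 1)).det
      = ((∑ i, (b i - z i) : ℤ) : ℚ) * (invFactMatrix b z).det := by
  have hcol (k : Fin n) : invFactMatrix b (z + Pi.single k 1)
      = (invFactMatrix b z).updateCol k
          fun i => ((b i : ℚ) + -(z k : ℚ)) * invFactMatrix b z i k := by
    ext i j
    rcases eq_or_ne j k with rfl | hjk
    · simp only [invFactMatrix, Matrix.of_apply, Matrix.updateCol_self, Pi.add_apply,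
        Pi.single_eq_same, ← sub_sub, invFact_sub_one]
      push_cast
      ring
    · simp [invFactMatrix, hjk]
  simp only [hcol, Matrix.sum_det_updateCol_add_mul, Finset.sum_neg_distrib]
  push_cast [Finset.sum_sub_distrib]
  ring

theorem injective_of_det_invFactMatrix_ne_zero {b z : Fin n → ℤ}
    (h : (invFactMatrix b z).det ≠ 0) : Function.Injective z := by
  intro j k hjk
  by_contra hne
  exact h (Matrix.det_zero_of_column_eq hne fun i => by simp [invFactMatrix, hjk])

theorem det_invFactMatrix_eq_zero {b z : Fin n → ℤ} (hb : Antitone b) (hz : Antitone z)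
    {k : Fin n} (hk : b k < z k) : (invFactMatrix b z).det = 0 :=
  Matrix.det_eq_zero_of_forall_le_le _ k fun i j hjk hki =>
    invFact_of_neg (by linarith [hb hki, hz hjk])

theorem det_invFactMatrix_self {b : Fin n → ℤ} (hb : StrictAnti b) :
    (invFactMatrix b b).det = 1 := by
  have htri : (invFactMatrix b b).BlockTriangular id := fun i j hji =>
    invFact_of_neg (sub_neg.2 (hb hji))
  rw [Matrix.det_of_isUpperTriangular htri]
  simp [invFactMatrix, invFact_zero]

end

section

variable {ι : Type*} [PartialOrder ι] [DecidableEq ι] {z : ι → ℤ}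

theorem StrictAnti.antitone_add_single (hz : StrictAnti z) (k : ι) :
    Antitone (z + Pi.single k 1) := by
  intro i j hij
  rcases hij.lt_or_eq with hij | rfl
  · have := hz hij
    simp only [Pi.add_apply, Pi.single_apply]
    split_ifs <;> omega
  · rfl

theorem StrictAnti.antitone_sub_single (hz : StrictAnti z) (k : ι) :
    Antitone (z - Pi.single k 1) := by
  intro i j hij
  rcases hij.lt_or_eq with hij | rfl
  · have := hz hij
    simp only [Pi.sub_apply, Pi.single_apply]
    split_ifs <;> omega
  · rfl

end

section

variable {n : ℕ}

noncomputable def admissibleTuples (b : Fin n → ℤ) (r : ℕ) : Finset (Fin n → ℤ) :=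
  ((Finset.Nat.antidiagonalTuple n r).image fun δ i => b i - δ i).filter StrictAnti

theorem mem_admissibleTuples {b z : Fin n → ℤ} {r : ℕ} :
    z ∈ admissibleTuples b r ↔ (∀ i, z i ≤ b i) ∧ ∑ i, (b i - z i) = r ∧ StrictAnti z := by
  simp only [admissibleTuples, mem_filter, mem_image, Finset.Nat.mem_antidiagonalTuple]
  rw [← and_assoc]
  refine and_congr_left' ⟨?_, ?_⟩
  · rintro ⟨δ, rfl, rfl⟩
    simp
  · rintro ⟨hle, hsum⟩
    have hδ (i : Fin n) : (((b i - z i).toNat : ℕ) : ℤ) = b i - z i :=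
      Int.toNat_of_nonneg (sub_nonneg.2 (hle i))
    refine ⟨fun i => (b i - z i).toNat, ?_, funext fun i => by simp [hδ]⟩
    exact_mod_cast (by simp only [Nat.cast_sum, hδ, hsum] : ((∑ i, (b i - z i).toNat : ℕ) : ℤ) = r)

theorem sum_admissibleTuples_eq_sum_filter (b : Fin n → ℤ) (r : ℕ) (f : (Fin n → ℤ) → ℚ) :
    ∑ z ∈ admissibleTuples b r, f z
      = ∑ δ ∈ (Finset.Nat.antidiagonalTuple n r).filter (fun δ => StrictAnti fun i => b i - δ i),
          f fun i => b i - δ i := by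
  rw [admissibleTuples, filter_image, sum_image]
  intro δ _ δ' _ h
  exact funext fun i => by simpa using congrFun h i

theorem admissibleTuples_zero {b : Fin n → ℤ} (hb : StrictAnti b) :
    admissibleTuples b 0 = {b} := by
  ext z
  rw [mem_admissibleTuples, mem_singleton]
  constructor
  · rintro ⟨hle, hsum, -⟩
    have := (Finset.sum_eq_zero_iff_of_nonneg fun i _ => sub_nonneg.2 (hle i)).1
      (by simpa using hsum)
    exact funext fun i => by linarith [this i (mem_univ i)]
  · rintro rfl
    simp [hb]

noncomputable def weightedSum (b : Fin n → ℤ) (r : ℕ) : ℚ :=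
  ∑ z ∈ admissibleTuples b r, (invFactMatrix b z).det * ((Matrix.vandermonde z).det : ℤ)

theorem sum_admissibleTuples_succ_eq_sum_shift {b : Fin n → ℤ} (hb : Antitone b) (k : Fin n)
    (r : ℕ) :
    ∑ z ∈ admissibleTuples b (r + 1),
        (invFactMatrix b (z + Pi.single k 1)).det * ((Matrix.vandermonde z).det : ℤ)
      = ∑ w ∈ admissibleTuples b r,
        (invFactMatrix b w).det * ((Matrix.vandermonde (w - Pi.single k 1)).det : ℤ) := by
  refine Finset.sum_bij_ne_zero (fun z _ _ => z + Pi.single k 1) ?_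
    (fun _ _ _ _ _ _ h => add_right_cancel h) ?_ (fun z _ _ => by rw [add_sub_cancel_right])
  · intro z hz hne
    obtain ⟨hle, hsum, hz⟩ := mem_admissibleTuples.1 hz
    have hM := left_ne_zero_of_mul hne
    -- if `z k = b k`, the shifted column `k` starts a zero block
    have hk : z k < b k := (hle k).lt_of_ne fun hk =>
      hM (det_invFactMatrix_eq_zero hb (hz.antitone_add_single k) (k := k) (by simp [hk]))
    refine mem_admissibleTuples.2 ⟨fun i => ?_, ?_,
      (hz.antitone_add_single k).strictAnti_of_injective
        (injective_of_det_invFactMatrix_ne_zero hM)⟩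
    · rcases eq_or_ne i k with rfl | hik
      · simpa using hk
      · simpa [hik] using hle i
    · simp [Finset.sum_sub_distrib, Finset.sum_add_distrib] at hsum ⊢
      linarith
  · intro w hw hne
    obtain ⟨hle, hsum, hw⟩ := mem_admissibleTuples.1 hw
    have hinj : Function.Injective (w - Pi.single k 1 : Fin n → ℤ) :=
      Matrix.det_vandermonde_ne_zero_iff.1 fun h => hne (by simp [h])
    refine ⟨w - Pi.single k 1, mem_admissibleTuples.2 ⟨fun i => ?_, ?_,
      (hw.antitone_sub_single k).strictAnti_of_injective hinj⟩,
      by simpa using hne, sub_add_cancel _ _⟩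
    · rcases eq_or_ne i k with rfl | hik
      · simp only [Pi.sub_apply, Pi.single_eq_same]
        linarith [hle i]
      · simpa [hik] using hle i
    · simp [Finset.sum_sub_distrib] at hsum ⊢
      linarith

theorem succ_mul_weightedSum_succ {b : Fin n → ℤ} (hb : Antitone b) (r : ℕ) :
    (r + 1 : ℚ) * weightedSum b (r + 1) = n * weightedSum b r := by
  calc (r + 1 : ℚ) * weightedSum b (r + 1)
      = ∑ z ∈ admissibleTuples b (r + 1),
          (∑ k, (invFactMatrix b (z + Pi.single k 1)).det) * ((Matrix.vandermonde z).det : ℤ) := by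
        rw [weightedSum, mul_sum]
        refine sum_congr rfl fun z hz => ?_
        rw [sum_det_invFactMatrix_add_single, (mem_admissibleTuples.1 hz).2.1]
        push_cast
        ring
    _ = ∑ k, ∑ w ∈ admissibleTuples b r,
          (invFactMatrix b w).det * ((Matrix.vandermonde (w - Pi.single k 1)).det : ℤ) := by
        simp_rw [sum_mul]
        rw [sum_comm]
        exact sum_congr rfl fun k _ => sum_admissibleTuples_succ_eq_sum_shift hb k r
    _ = n * weightedSum b r := by
        rw [sum_comm, weightedSum, mul_sum]
        refine sum_congr rfl fun w _ => ?_
        have hsub (k : Fin n) : w - Pi.single k 1 = w + Pi.single k (-1) := by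
          rw [Pi.single_neg, sub_eq_add_neg]
        rw [← mul_sum, ← Int.cast_sum]
        simp only [hsub, Matrix.sum_det_vandermonde_add_single]
        push_cast
        ring

theorem factorial_mul_weightedSum {b : Fin n → ℤ} (hb : StrictAnti b) (r : ℕ) :
    r.factorial * weightedSum b r = n ^ r * (Matrix.vandermonde b).det := by
  induction r with
  | zero => simp [weightedSum, admissibleTuples_zero hb, det_invFactMatrix_self hb]
  | succ r ih =>
    rw [Nat.factorial_succ, Nat.cast_mul, mul_comm ((r + 1 : ℕ) : ℚ), mul_assoc, Nat.cast_succ,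
      succ_mul_weightedSum_succ hb.antitone, mul_left_comm, ih, pow_succ]
    ring

end

def lambarHalf (K : ℕ) (η : ℕ → ℕ) (i : ℕ) : ℤ :=
  ∑ h ∈ Ico i (K - 1), ((η h : ℤ) + 1)

theorem lambar_sub_eq {K : ℕ} (η : ℕ → ℕ) {i : ℕ} (hi : i < K) :
    (lambar K η i : ℤ) - i = 2 * lambarHalf K η i - (K - 1) := by
  simp only [lambar, lambarHalf, Nat.cast_sum, Nat.cast_add, Nat.cast_mul, Nat.cast_ofNat,
    sum_add_distrib, ← mul_sum, sum_const, Nat.card_Ico, nsmul_eq_mul, mul_one]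
  push_cast [show i ≤ K - 1 by omega, show 1 ≤ K by omega]
  ring

theorem lambar_sub_lambar_add_sub {K : ℕ} (η : ℕ → ℕ) {i j : ℕ} (hi : i < K) (hj : j < K) :
    (lambar K η i : ℤ) - lambar K η j + j - i = 2 * (lambarHalf K η i - lambarHalf K η j) := by
  linarith [lambar_sub_eq η hi, lambar_sub_eq η hj]

theorem lambarHalf_eq_add {K : ℕ} (η : ℕ → ℕ) {i : ℕ} (hi : i + 1 < K) :
    lambarHalf K η i = lambarHalf K η (i + 1) + η i + 1 := by
  simp only [lambarHalf]
  rw [sum_eq_sum_Ico_succ_bot (by omega)]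
  ring

theorem strictAnti_lambarHalf_sub_iff {K : ℕ} (η : ℕ → ℕ) (δ : Fin K → ℕ) :
    StrictAnti (fun i : Fin K => lambarHalf K η i - δ i)
      ↔ ∀ i j : Fin K, (j : ℕ) = i + 1 → δ i ≤ δ j + η i := by
  rw [Fin.strictAnti_iff_lt_of_val_eq_add_one]
  refine forall₂_congr fun i j => imp_congr_right fun hij => ?_
  rw [lambarHalf_eq_add η (i := i) (by omega), ← hij]
  omega

theorem of_invFact_lambar_eq_invFactMatrix {K : ℕ} (η : ℕ → ℕ) (δ : Fin K → ℕ) :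
    (Matrix.of fun i j : Fin K =>
        invFact ((δ j : ℤ) + ((lambar K η i : ℤ) - (lambar K η j : ℤ) + (j : ℤ) - (i : ℤ)) / 2))
      = invFactMatrix (fun i => lambarHalf K η i) fun i => lambarHalf K η i - δ i := by
  ext i j
  simp only [Matrix.of_apply, invFactMatrix, lambar_sub_lambar_add_sub η i.isLt j.isLt,
    Int.mul_ediv_cancel_left _ two_ne_zero]
  ring_nf

theorem prod_lambar_ratio_eq {K : ℕ} (η : ℕ → ℕ) (δ : Fin K → ℕ) :
    ∏ i : Fin K, ∏ j : Fin K,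
        (if i < j then
          ((lambar K η i : ℚ) - (lambar K η j : ℚ) - 2 * (δ i : ℚ) + 2 * (δ j : ℚ) +
              (j : ℚ) - (i : ℚ)) /
            ((lambar K η i : ℚ) - (lambar K η j : ℚ) + (j : ℚ) - (i : ℚ))
        else 1)
      = ((Matrix.vandermonde fun i : Fin K => lambarHalf K η i - δ i).det : ℤ)
          / ((Matrix.vandermonde fun i : Fin K => lambarHalf K η i).det : ℤ) := by
  rw [Matrix.intCast_det_vandermonde, Matrix.intCast_det_vandermonde,
    ← prod_ite_lt_div_eq_det_vandermonde_div]
  refine prod_congr rfl fun i _ => prod_congr rfl fun j _ => ?_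
  have hgap : (lambar K η i : ℚ) - lambar K η j + j - i
      = 2 * (lambarHalf K η i - lambarHalf K η j) := by
    exact_mod_cast lambar_sub_lambar_add_sub η i.isLt j.isLt
  split_ifs
  · rw [show (lambar K η i : ℚ) - lambar K η j - 2 * δ i + 2 * δ j + j - i
        = 2 * ((lambarHalf K η i - δ i) - (lambarHalf K η j - δ j)) by linarith,
      hgap, mul_div_mul_left _ _ two_ne_zero]
    push_cast
    rfl
  · rfl

theorem stmt11_general (K : ℕ) (η : ℕ → ℕ) (r : ℕ) :
    (r.factorial : ℚ) *
      ∑ δ ∈ (Finset.Nat.antidiagonalTuple K r).filter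
          (fun δ : Fin K → ℕ => ∀ i j : Fin K, (j : ℕ) = (i : ℕ) + 1 → δ i ≤ δ j + η i),
        (Matrix.det (Matrix.of fun i j : Fin K =>
            invFact ((δ j : ℤ) +
              ((lambar K η i : ℤ) - (lambar K η j : ℤ) + (j : ℤ) - (i : ℤ)) / 2))) *
          ∏ i : Fin K, ∏ j : Fin K,
            (if i < j then
              ((lambar K η i : ℚ) - (lambar K η j : ℚ) - 2 * (δ i : ℚ) + 2 * (δ j : ℚ) +
                  (j : ℚ) - (i : ℚ)) /
                ((lambar K η i : ℚ) - (lambar K η j : ℚ) + (j : ℚ) - (i : ℚ))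
            else 1)
      = (K : ℚ) ^ r := by
  set b : Fin K → ℤ := fun i => lambarHalf K η i
  have hb : StrictAnti b := by simpa using strictAnti_lambarHalf_sub_iff η 0
  have hV : ((Matrix.vandermonde b).det : ℚ) ≠ 0 :=
    Int.cast_ne_zero.2 (Matrix.det_vandermonde_ne_zero_iff.2 hb.injective)
  rw [filter_congr fun δ _ => (strictAnti_lambarHalf_sub_iff η δ).symm]
  simp only [of_invFact_lambar_eq_invFactMatrix, prod_lambar_ratio_eq, mul_div_assoc']
  rw [← sum_div, ← sum_admissibleTuples_eq_sum_filter b r fun z =>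
      (invFactMatrix b z).det * ((Matrix.vandermonde z).det : ℤ), ← weightedSum, mul_div_assoc',
    factorial_mul_weightedSum hb, mul_div_cancel_right₀ _ hV]

/-- Fix `K ≥ 2`, nonnegative integers `η_1, …, η_{K−1}` and set
`λ̄_i = Σ_{h=i}^{K−1} (2η_h + 1)` (all written `0`-indexed below).  Then for every `r ≥ 0`,
`r! Σ_δ det(1/(δ_j + (λ̄_i − λ̄_j + j − i)/2)!)_{i,j} ∏_{i<j} (λ̄_i − λ̄_j − 2δ_i + 2δ_j + j − i)/(λ̄_i − λ̄_j + j − i) = K^r`,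
the sum over `K`-tuples `δ` of nonnegative integers with `Σ δ_i = r` and
`δ_i ≤ δ_{i+1} + η_i`, with the convention `1/m! = 0` for `m < 0`. -/
theorem stmt11 (K : ℕ) (hK : 2 ≤ K) (η : ℕ → ℕ) (r : ℕ) :
    (r.factorial : ℚ) *
      ∑ δ ∈ (Finset.Nat.antidiagonalTuple K r).filter
          (fun δ : Fin K → ℕ => ∀ i j : Fin K, (j : ℕ) = (i : ℕ) + 1 → δ i ≤ δ j + η i),
        (Matrix.det (Matrix.of fun i j : Fin K =>
            invFact ((δ j : ℤ) +
              ((lambar K η i : ℤ) - (lambar K η j : ℤ) + (j : ℤ) - (i : ℤ)) / 2))) *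
          ∏ i : Fin K, ∏ j : Fin K,
            (if i < j then
              ((lambar K η i : ℚ) - (lambar K η j : ℚ) - 2 * (δ i : ℚ) + 2 * (δ j : ℚ) +
                  (j : ℚ) - (i : ℚ)) /
                ((lambar K η i : ℚ) - (lambar K η j : ℚ) + (j : ℚ) - (i : ℚ))
            else 1)
      = (K : ℚ) ^ r :=
  stmt11_general K η r
end

section
/- Let s ≥ 1 and let H be a simple graph on the vertex set {1, …, s} with c connected components. Then for every integer N ≥ 1, the number of tuples k = (k_1, …, k_s) ∈ {1, …, N}^s such that for all p ≠ q one has {p,q} an edge of H if and only if |k_p − k_q| ≤ 1, is at most 3^s · N^c. -/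
open Finset

attribute [local instance] Classical.propDecidable

/-!
Root every connected component of `H` at a representative and let the parent of any other vertex
be a neighbour one step closer to the root along a shortest path. A labelling `k` whose values
differ by at most one along edges is then determined by its values at the `c` roots and by the
differences `k v - k (parent v) ∈ {-1, 0, 1}`, which leaves at most `N ^ c * 3 ^ s` labellings.
-/

namespace SimpleGraph

variable {V : Type*} {G : SimpleGraph V} {u v : V}

lemma Reachable.exists_adj_dist_add_one (h : G.Reachable u v) (hne : u ≠ v) :
    ∃ w, G.Adj w v ∧ G.dist u w + 1 = G.dist u v := by
  obtain ⟨p, hp⟩ := h.exists_walk_length_eq_dist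
  have hnil : ¬p.Nil := Walk.not_nil_of_ne hne
  have hadj := p.adj_penultimate hnil
  refine ⟨p.penultimate, hadj, le_antisymm ?_ ?_⟩
  · have := G.dist_le p.dropLast
    have := Walk.length_dropLast_add_one hnil
    omega
  · have := Reachable.dist_triangle_left (G := G) ⟨p.dropLast⟩ v
    rwa [dist_eq_one_iff_adj.mpr hadj] at this

variable (G)

noncomputable def root (v : V) : V := (G.connectedComponentMk v).out

noncomputable def depth (v : V) : ℕ := G.dist (G.root v) v

lemma reachable_root (v : V) : G.Reachable (G.root v) v :=
  ConnectedComponent.exact (G.connectedComponentMk v).out_eq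

variable {G}

lemma root_eq_of_depth_eq_zero (h : G.depth v = 0) : G.root v = v :=
  (G.reachable_root v).dist_eq_zero_iff.mp h

lemma Adj.root_eq (h : G.Adj u v) : G.root u = G.root v := by
  rw [root, root, ConnectedComponent.sound h.reachable]

lemma exists_adj_depth_add_one (h : G.depth v ≠ 0) :
    ∃ w, G.Adj w v ∧ G.depth w + 1 = G.depth v := by
  obtain ⟨w, hadj, hw⟩ := (G.reachable_root v).exists_adj_dist_add_one
    fun he => h (by rw [depth, he, dist_self])
  refine ⟨w, hadj, ?_⟩
  rwa [depth, hadj.root_eq]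

variable (G) in
noncomputable def parent (v : V) : V :=
  if h : G.depth v = 0 then v else (exists_adj_depth_add_one h).choose

lemma parent_of_depth_eq_zero (h : G.depth v = 0) : G.parent v = v := dif_pos h

lemma adj_parent (h : G.depth v ≠ 0) : G.Adj (G.parent v) v := by
  rw [parent, dif_neg h]
  exact (exists_adj_depth_add_one h).choose_spec.1

lemma depth_parent_add_one (h : G.depth v ≠ 0) : G.depth (G.parent v) + 1 = G.depth v := by
  rw [parent, dif_neg h]
  exact (exists_adj_depth_add_one h).choose_spec.2

lemma parent_eq_or_adj (v : V) : G.parent v = v ∨ G.Adj (G.parent v) v := by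
  by_cases h : G.depth v = 0
  · exact .inl (parent_of_depth_eq_zero h)
  · exact .inr (adj_parent h)

theorem eq_of_sub_parent_eq {α : Type*} [AddGroup α] {f g : V → α}
    (hroot : ∀ C : G.ConnectedComponent, f C.out = g C.out)
    (hparent : ∀ v, f v - f (G.parent v) = g v - g (G.parent v)) : f = g := by
  funext v
  induction hd : G.depth v using Nat.strong_induction_on generalizing v with
  | _ n ih =>
    by_cases h : G.depth v = 0
    · rw [← root_eq_of_depth_eq_zero h]
      exact hroot _
    · have hpar : f (G.parent v) = g (G.parent v) :=
        ih _ (by have := depth_parent_add_one h; omega) _ rfl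
      rw [← sub_add_cancel (f v) (f (G.parent v)), hparent, hpar, sub_add_cancel]

theorem card_filter_forall_adj_abs_sub_le_one_le [Fintype V] [DecidableEq V]
    [Fintype G.ConnectedComponent] (N : ℕ) : #{k : V → Fin N | ∀ p q, G.Adj p q → |(k p : ℤ) - k q| ≤ 1} ≤
      N ^ Fintype.card G.ConnectedComponent * 3 ^ Fintype.card V := by
  set S : Finset (V → Fin N) := {k : V → Fin N | ∀ p q, G.Adj p q → |(k p : ℤ) - k q| ≤ 1}
  let Φ (k : V → Fin N) : (G.ConnectedComponent → Fin N) × (V → ℤ) :=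
    (fun C => k C.out, fun v => (k v : ℤ) - k (G.parent v))
  have hmaps : ∀ k ∈ S, Φ k ∈ (univ ×ˢ Fintype.piFinset fun _ => Icc (-1) 1) := by
    intro k hk
    simp only [mem_product, mem_univ, Fintype.mem_piFinset, mem_Icc, true_and, ← abs_le, Φ]
    intro v
    rcases parent_eq_or_adj v with h | h
    · rw [h, sub_self, abs_zero]
      exact zero_le_one
    · rw [abs_sub_comm]
      exact (mem_filter.mp hk).2 _ _ h
  have hinj : Set.InjOn Φ S := by
    intro k₁ _ k₂ _ heq
    obtain ⟨hroot, hdiff⟩ := Prod.ext_iff.mp heq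
    have := eq_of_sub_parent_eq (G := G) (f := fun v => (k₁ v : ℤ)) (g := fun v => (k₂ v : ℤ))
      (fun C => congrArg (fun x : Fin N => (x : ℤ)) (congrFun hroot C)) (congrFun hdiff)
    funext v
    exact Fin.ext (by exact_mod_cast congrFun this v)
  calc #S ≤ #(univ ×ˢ Fintype.piFinset fun _ : V => Icc (-1 : ℤ) 1) :=
        card_le_card_of_injOn Φ hmaps hinj
    _ = _ := by simp

end SimpleGraph

theorem stmt15_general (s : ℕ) (H : SimpleGraph (Fin s)) (c : ℕ)
    (hc : c = Fintype.card H.ConnectedComponent) (N : ℕ) :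
    (Finset.univ.filter fun k : Fin s → Fin N =>
        ∀ p q : Fin s, p ≠ q → (H.Adj p q ↔ |((k p : ℤ)) - ((k q : ℤ))| ≤ 1)).card
      ≤ 3 ^ s * N ^ c := by
  subst hc
  refine (card_le_card fun k hk => ?_).trans
    ((H.card_filter_forall_adj_abs_sub_le_one_le N).trans_eq ?_)
  · simp only [mem_filter, mem_univ, true_and] at hk ⊢
    exact fun p q hadj => (hk p q hadj.ne).mp hadj
  · rw [Fintype.card_fin, mul_comm]

/-- Let `s ≥ 1` and let `H` be a simple graph on `{1, …, s}` with `c` connected components.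
For every `N ≥ 1`, the number of tuples `k ∈ {1, …, N}^s` such that for all `p ≠ q`, `{p,q}` is
an edge of `H` iff `|k_p − k_q| ≤ 1`, is at most `3^s · N^c`. -/
theorem stmt15 (s : ℕ) (hs : 1 ≤ s) (H : SimpleGraph (Fin s)) (c : ℕ)
    (hc : c = Fintype.card H.ConnectedComponent) (N : ℕ) (hN : 1 ≤ N) :
    (Finset.univ.filter fun k : Fin s → Fin N =>
        ∀ p q : Fin s, p ≠ q → (H.Adj p q ↔ |((k p : ℤ)) - ((k q : ℤ))| ≤ 1)).card
      ≤ 3 ^ s * N ^ c :=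
  stmt15_general s H c hc N
end
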